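/- arXiv:1502.00327 — 3 statements merged into one kernel-verified Lean document; each statement's English description precedes it below -/
import Mathlib

section
/- Let (X_1,...,X_S) ∼ Multinomial(n; p_1,...,p_S) with n ≥ Sa, a > 0, and let P̂_B be the Dirichlet-smoothed distribution with p̂_{B,i} = (X_i+a)/(n+Sa). Then sup over all distributions P on S elements of |E_P[H(P̂_B)] - H(P)| ≤ ln(1 + (S-1)/(n+Sa)) + (2Sa/(n+Sa))·ln((n+Sa)/(2a)). -/
open Finset

/-- Expectation of `g` of the counts of a Multinomial(n; p) random vector. -/
noncomputable def mExp (n S : ℕ) (p : Fin S → ℝ) (g : (Fin S → ℕ) → ℝ) : ℝ :=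
  ∑ x : Fin S → Fin (n + 1),
    if (∑ i, ((x i : ℕ))) = n then
      ((n.factorial : ℝ) / ∏ i, ((x i : ℕ).factorial : ℝ)) *
        (∏ i, p i ^ (x i : ℕ)) * g (fun i => (x i : ℕ))
    else 0

/-- Dirichlet-smoothed plug-in entropy H(P̂_B) with p̂_{B,i} = (X_i+a)/(n+Sa). -/
noncomputable def Hhat (n S : ℕ) (a : ℝ) (x : Fin S → ℕ) : ℝ :=
  -∑ i, (((x i : ℝ) + a) / ((n : ℝ) + S * a)) *
      Real.log (((x i : ℝ) + a) / ((n : ℝ) + S * a))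


/-!
Put `N = n + S a` and `λ = S a / N ≤ 1/2`. The mean of `P̂_B` is `q = (1 - λ) P + λ U` with `U`
uniform, and `E[H(P̂_B)] - H(P) = (H(q) - H(P)) - E[D(P̂_B ‖ q)]`.

Concavity of entropy together with `H(P) ≤ log S` gives `H(P) ≤ H(q)`. Conversely, `q` moves the
mass `λ (1/S - p_i)` onto the fewer than `S` coordinates with `p_i < 1/S`, which raises the entropy
by at most `(S - 1) φ(λ/S)` with `φ x = x - x log x`, and this is at most `2 λ log (S / (2 λ))`.

Jensen's inequality for `log`, used once inside `D` and once for the expectation, bounds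
`E[D(P̂_B ‖ q)]` by the logarithm of the expected chi-square statistic `E[∑ p̂_i² / q_i]`; the
first two multinomial moments show the latter to be at most `1 + (S - 1) / N`.
-/

open Real

noncomputable def entropy {ι : Type*} [Fintype ι] (p : ι → ℝ) : ℝ := ∑ i, negMulLog (p i)

noncomputable def relEntropy {ι : Type*} [Fintype ι] (r q : ι → ℝ) : ℝ :=
  ∑ i, r i * log (r i / q i)

theorem entropy_eq_neg_sum {ι : Type*} [Fintype ι] (p : ι → ℝ) :
    entropy p = -∑ i, p i * log (p i) := by
  simp only [entropy, negMulLog, neg_mul, sum_neg_distrib]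

theorem sum_mul_log_le_log_sum_mul {ι : Type*} (s : Finset ι) {w z : ι → ℝ}
    (hw : ∀ i ∈ s, 0 ≤ w i) (hw1 : ∑ i ∈ s, w i = 1) (hz : ∀ i ∈ s, 0 < z i) :
    ∑ i ∈ s, w i * log (z i) ≤ log (∑ i ∈ s, w i * z i) :=
  strictConcaveOn_log_Ioi.concaveOn.le_map_sum hw hw1 hz

section Entropy

variable {ι : Type*} [Fintype ι] {r q p : ι → ℝ}

theorem nonempty_of_sum_eq_one (hp1 : ∑ i, p i = 1) : Nonempty ι := by
  by_contra h
  simp [not_nonempty_iff.mp h] at hp1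

theorem relEntropy_nonneg (hr : ∀ i, 0 < r i) (hq : ∀ i, 0 < q i) (hr1 : ∑ i, r i = 1)
    (hq1 : ∑ i, q i = 1) : 0 ≤ relEntropy r q := by
  have jensen := sum_mul_log_le_log_sum_mul univ (fun i _ ↦ (hr i).le) hr1
    (fun i _ ↦ div_pos (hq i) (hr i))
  have hsum : ∑ i, r i * (q i / r i) = 1 := by
    rw [← hq1]; exact sum_congr rfl fun i _ ↦ mul_div_cancel₀ _ (hr i).ne'
  rw [hsum, log_one] at jensen
  have hflip : ∀ i, r i * log (r i / q i) = -(r i * log (q i / r i)) := fun i ↦ by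
    rw [← inv_div, log_inv, mul_neg]
  simp only [relEntropy, hflip, sum_neg_distrib]
  linarith

theorem relEntropy_le_log_sum_sq_div (hr : ∀ i, 0 < r i) (hq : ∀ i, 0 < q i)
    (hr1 : ∑ i, r i = 1) : relEntropy r q ≤ log (∑ i, r i ^ 2 / q i) := by
  have jensen := sum_mul_log_le_log_sum_mul univ (fun i _ ↦ (hr i).le) hr1
    (fun i _ ↦ div_pos (hr i) (hq i))
  simpa only [relEntropy, mul_div_assoc', sq] using jensen

theorem entropy_le_log_card (hp : ∀ i, 0 ≤ p i) (hp1 : ∑ i, p i = 1) :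
    entropy p ≤ log (Fintype.card ι) := by
  have := nonempty_of_sum_eq_one hp1
  have hcard : (0 : ℝ) < Fintype.card ι := by exact_mod_cast Fintype.card_pos
  set c : ℝ := (Fintype.card ι)⁻¹
  have jensen := concaveOn_negMulLog.le_map_sum (t := univ) (w := fun _ ↦ c)
    (fun _ _ ↦ by positivity) (by simp [c, hcard.ne']) (fun i _ ↦ Set.mem_Ici.2 (hp i))
  simp only [smul_eq_mul, ← mul_sum, hp1, mul_one] at jensen
  rw [negMulLog, log_inv] at jensen
  rw [entropy]
  have : c * Fintype.card ι = 1 := inv_mul_cancel₀ hcard.ne'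
  nlinarith

theorem entropy_le_entropy_mix {t : ℝ} (ht0 : 0 ≤ t) (ht1 : t ≤ 1) (hp : ∀ i, 0 ≤ p i)
    (hp1 : ∑ i, p i = 1) :
    entropy p ≤ entropy (fun i ↦ (1 - t) * p i + t / Fintype.card ι) := by
  have hconc : ∀ i, (1 - t) * negMulLog (p i) + t * negMulLog (Fintype.card ι)⁻¹
      ≤ negMulLog ((1 - t) * p i + t / Fintype.card ι) := fun i ↦ by
    simpa only [smul_eq_mul, div_eq_mul_inv] using
      concaveOn_negMulLog.2 (Set.mem_Ici.2 (hp i)) (Set.mem_Ici.2 (by positivity))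
        (by linarith) ht0 (by ring)
  have hsum := sum_le_sum fun i (_ : i ∈ univ) ↦ hconc i
  have := nonempty_of_sum_eq_one hp1
  have hcard : (Fintype.card ι : ℝ) ≠ 0 := by exact_mod_cast Fintype.card_ne_zero
  have huniform : ∑ _i : ι, t * negMulLog (Fintype.card ι : ℝ)⁻¹ = t * log (Fintype.card ι) := by
    rw [sum_const, card_univ, nsmul_eq_mul, negMulLog, log_inv]
    field_simp
  rw [sum_add_distrib, ← mul_sum, huniform] at hsum
  have hlog := entropy_le_log_card hp hp1
  unfold entropy at hlog ⊢
  nlinarith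

end Entropy

section Mixture

variable {ι : Type*} [Fintype ι] {p : ι → ℝ}

theorem negMulLog_add_le {x y : ℝ} (hx : 0 ≤ x) (hy : 0 ≤ y) :
    negMulLog (x + y) ≤ negMulLog x + negMulLog y := by
  rcases hx.eq_or_lt with rfl | hx
  · simp
  rcases hy.eq_or_lt with rfl | hy
  · simp
  have hlx : log x ≤ log (x + y) := log_le_log hx (by linarith)
  have hly : log y ≤ log (x + y) := log_le_log hy (by linarith)
  simp only [negMulLog]
  nlinarith

theorem monotoneOn_negMulLog_add_self : MonotoneOn (fun x ↦ negMulLog x + x) (Set.Icc 0 1) := by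
  have hderiv : ∀ x ∈ Set.Ioo (0 : ℝ) 1, HasDerivAt (fun x ↦ negMulLog x + x) (-log x - 1 + 1) x :=
    fun x hx ↦ (hasDerivAt_negMulLog hx.1.ne').add (hasDerivAt_id' x)
  refine monotoneOn_of_deriv_nonneg (convex_Icc 0 1) (by fun_prop) ?_ ?_ <;>
    rw [interior_Icc] <;> intro x hx
  · exact (hderiv x hx).differentiableAt.differentiableWithinAt
  · rw [(hderiv x hx).deriv]
    linarith [log_nonpos hx.1.le hx.2.le]

theorem negMulLog_add_sub_negMulLog_add_le {x e c : ℝ} (hx : 0 ≤ x) (he : 0 ≤ e) (hec : e ≤ c)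
    (hc : c ≤ 1) : negMulLog (x + e) - negMulLog x + e ≤ negMulLog c + c := by
  have hsub := negMulLog_add_le hx he
  have hmono := monotoneOn_negMulLog_add_self ⟨he, hec.trans hc⟩ ⟨he.trans hec, hc⟩ hec
  dsimp only at hmono
  linarith

theorem negMulLog_add_sub_negMulLog_add_nonpos {x e : ℝ} (hx : x ≤ 1) (he : e ≤ 0)
    (hxe : 0 ≤ x + e) : negMulLog (x + e) - negMulLog x + e ≤ 0 := by
  have hmono := monotoneOn_negMulLog_add_self ⟨hxe, by linarith⟩ ⟨by linarith, hx⟩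
    (by linarith : x + e ≤ x)
  dsimp only at hmono
  linarith

theorem card_filter_lt_inv_card_le (hp1 : ∑ i, p i = 1) :
    (#{i | p i < (Fintype.card ι : ℝ)⁻¹} : ℝ) ≤ Fintype.card ι - 1 := by
  have := nonempty_of_sum_eq_one hp1
  obtain ⟨j, hj⟩ : ∃ j, (Fintype.card ι : ℝ)⁻¹ ≤ p j := by
    by_contra! h
    have hlt := sum_lt_sum_of_nonempty univ_nonempty fun i (_ : i ∈ univ) ↦ h i
    rw [hp1, sum_const, card_univ, nsmul_eq_mul, mul_inv_cancel₀ (by positivity)] at hlt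
    exact lt_irrefl _ hlt
  have hcard := card_lt_univ_of_notMem (s := {i | p i < (Fintype.card ι : ℝ)⁻¹})
    fun h ↦ (mem_filter.1 h).2.not_ge hj
  rw [le_sub_iff_add_le]
  exact_mod_cast hcard

/-- Writing `q_i = p_i + e_i` with `e_i = t (1/S - p_i)`, which sum to zero: on the coordinates
with `e_i ≥ 0` subadditivity of `negMulLog` bounds the gain, and elsewhere monotonicity of
`x ↦ x - x log x` on `[0, 1]` bounds the loss by `-e_i`. -/
theorem entropy_mix_sub_entropy_le {t : ℝ} (ht0 : 0 ≤ t) (ht1 : t ≤ 1) (hp : ∀ i, 0 ≤ p i)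
    (hp1 : ∑ i, p i = 1) :
    entropy (fun i ↦ (1 - t) * p i + t / Fintype.card ι) - entropy p
      ≤ (Fintype.card ι - 1) * (negMulLog (t / Fintype.card ι) + t / Fintype.card ι) := by
  classical
  have := nonempty_of_sum_eq_one hp1
  set S : ℝ := (Fintype.card ι : ℝ) with hS
  have hS1 : 1 ≤ S := Nat.one_le_cast.2 Fintype.card_pos
  have hc1 : t / S ≤ 1 := div_le_one_of_le₀ (by linarith) (by linarith)
  have hterm : ∀ i, negMulLog (p i + t * (S⁻¹ - p i)) - negMulLog (p i) + t * (S⁻¹ - p i)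
      ≤ if i ∈ ({i | p i < S⁻¹} : Finset ι) then negMulLog (t / S) + t / S else 0 := by
    intro i
    have hpi1 : p i ≤ 1 := hp1 ▸ single_le_sum (fun j _ ↦ hp j) (mem_univ i)
    split_ifs with hi
    · have hpi : p i < S⁻¹ := (mem_filter.1 hi).2
      exact negMulLog_add_sub_negMulLog_add_le (hp i) (by nlinarith)
        (by rw [div_eq_mul_inv]; nlinarith [hp i]) hc1
    · have hpi : S⁻¹ ≤ p i := by simpa using hi
      have hinv : 0 ≤ S⁻¹ := by positivity
      exact negMulLog_add_sub_negMulLog_add_nonpos hpi1 (by nlinarith) (by nlinarith)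
  have hshift : ∑ i, t * (S⁻¹ - p i) = 0 := by
    rw [← mul_sum, sum_sub_distrib, hp1, sum_const, card_univ, nsmul_eq_mul, ← hS,
      mul_inv_cancel₀ (by positivity), sub_self, mul_zero]
  have hsum := sum_le_sum fun i (_ : i ∈ univ) ↦ hterm i
  rw [sum_add_distrib, hshift, add_zero, sum_sub_distrib, sum_ite_mem, univ_inter, sum_const,
    nsmul_eq_mul] at hsum
  have hmix : ∀ i, (1 - t) * p i + t / S = p i + t * (S⁻¹ - p i) := fun i ↦ by ring
  simp only [entropy, hmix]
  nlinarith [card_filter_lt_inv_card_le hp1,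
    add_nonneg (negMulLog_nonneg (by positivity) hc1) (by positivity : 0 ≤ t / S)]

theorem sub_one_mul_negMulLog_div_add_le {S t : ℝ} (hS : 2 ≤ S) (ht0 : 0 < t) (ht : t ≤ 1 / 2) :
    (S - 1) * (negMulLog (t / S) + t / S) ≤ 2 * t * log (S / (2 * t)) := by
  have hlogS : 2 * (S - 1) / (S - 1 + 2) ≤ log S := by
    simpa using le_log_one_add_of_nonneg (show 0 ≤ S - 1 by linarith)
  rw [div_le_iff₀ (by linarith)] at hlogS
  have hlogt : log 2 ≤ -log t := by
    rw [← log_inv]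
    exact log_le_log (by norm_num) (by rw [le_inv_comm₀ (by norm_num) ht0]; linarith)
  have hlog2 : log 2 < 1 := by linarith [log_two_lt_d9]
  rw [negMulLog, log_div ht0.ne' (by linarith), log_div (by linarith) (by positivity),
    log_mul two_ne_zero ht0.ne']
  have key : (S - 1) * (1 + log S - log t) ≤ 2 * S * (log S - log 2 - log t) := by
    nlinarith
  have hS0 : 0 < S := by linarith
  calc (S - 1) * (-(t / S) * (log t - log S) + t / S)
      = t / S * ((S - 1) * (1 + log S - log t)) := by ring
    _ ≤ t / S * (2 * S * (log S - log 2 - log t)) := by gcongr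
    _ = 2 * t * (log S - (log 2 + log t)) := by field_simp; ring

end Mixture

section Decomposition

variable {Ω ι : Type*} [Fintype ι] (T : Finset Ω) {w : Ω → ℝ} {r : Ω → ι → ℝ} {q : ι → ℝ}

theorem sum_mul_entropy_eq_entropy_sub (hr : ∀ y ∈ T, ∀ i, 0 < r y i) (hq : ∀ i, 0 < q i)
    (hmean : ∀ i, ∑ y ∈ T, w y * r y i = q i) :
    ∑ y ∈ T, w y * entropy (r y) = entropy q - ∑ y ∈ T, w y * relEntropy (r y) q := by
  have hsplit : ∀ y ∈ T, entropy (r y) = -∑ i, r y i * log (q i) - relEntropy (r y) q := by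
    intro y hy
    rw [entropy_eq_neg_sum, relEntropy, neg_sub_left, ← sum_add_distrib]
    congr 1
    refine sum_congr rfl fun i _ ↦ ?_
    rw [log_div (hr y hy i).ne' (hq i).ne']
    ring
  have hcross : ∑ y ∈ T, w y * ∑ i, r y i * log (q i) = ∑ i, q i * log (q i) := by
    simp only [mul_sum, ← hmean, sum_mul]
    rw [sum_comm]
    exact sum_congr rfl fun _ _ ↦ sum_congr rfl fun _ _ ↦ by ring
  rw [sum_congr rfl fun y hy ↦ by rw [hsplit y hy], entropy_eq_neg_sum, ← hcross]
  simp only [mul_sub, mul_neg, sum_sub_distrib, sum_neg_distrib]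

theorem sum_mul_relEntropy_nonneg (hw : ∀ y ∈ T, 0 ≤ w y) (hr : ∀ y ∈ T, ∀ i, 0 < r y i)
    (hr1 : ∀ y ∈ T, ∑ i, r y i = 1) (hq : ∀ i, 0 < q i) (hq1 : ∑ i, q i = 1) :
    0 ≤ ∑ y ∈ T, w y * relEntropy (r y) q :=
  sum_nonneg fun y hy ↦ mul_nonneg (hw y hy) (relEntropy_nonneg (hr y hy) hq (hr1 y hy) hq1)

theorem sum_mul_relEntropy_le_log (hw : ∀ y ∈ T, 0 ≤ w y) (hw1 : ∑ y ∈ T, w y = 1)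
    (hr : ∀ y ∈ T, ∀ i, 0 < r y i) (hr1 : ∀ y ∈ T, ∑ i, r y i = 1) (hq : ∀ i, 0 < q i) {C : ℝ}
    (hC : ∑ y ∈ T, w y * ∑ i, r y i ^ 2 / q i ≤ C) :
    ∑ y ∈ T, w y * relEntropy (r y) q ≤ log C := by
  have hchi : ∀ y ∈ T, 0 < ∑ i, r y i ^ 2 / q i := fun y hy ↦
    have := nonempty_of_sum_eq_one (hr1 y hy)
    sum_pos (fun i _ ↦ div_pos (pow_pos (hr y hy i) 2) (hq i)) univ_nonempty
  have hmean_pos : 0 < ∑ y ∈ T, w y * ∑ i, r y i ^ 2 / q i := by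
    obtain ⟨y, hy, hwy⟩ := exists_lt_of_sum_lt (f := fun _ ↦ (0 : ℝ)) (g := w) (s := T)
      (by rw [sum_const_zero, hw1]; exact one_pos)
    exact sum_pos' (fun y hy ↦ mul_nonneg (hw y hy) (hchi y hy).le)
      ⟨y, hy, mul_pos hwy (hchi y hy)⟩
  calc ∑ y ∈ T, w y * relEntropy (r y) q ≤ ∑ y ∈ T, w y * log (∑ i, r y i ^ 2 / q i) :=
        sum_le_sum fun y hy ↦ mul_le_mul_of_nonneg_left
          (relEntropy_le_log_sum_sq_div (hr y hy) hq (hr1 y hy)) (hw y hy)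
    _ ≤ log (∑ y ∈ T, w y * ∑ i, r y i ^ 2 / q i) := sum_mul_log_le_log_sum_mul T hw hw1 hchi
    _ ≤ log C := log_le_log hmean_pos hC

end Decomposition

section Multinomial

variable {ι : Type*} [Fintype ι] {p : ι → ℝ}

noncomputable def multinomialWeight (p : ι → ℝ) (y : ι → ℕ) : ℝ :=
  Nat.multinomial univ y * ∏ i, p i ^ y i

theorem multinomialWeight_nonneg (hp : ∀ i, 0 ≤ p i) (y : ι → ℕ) : 0 ≤ multinomialWeight p y :=
  mul_nonneg (Nat.cast_nonneg _) (prod_nonneg fun i _ ↦ pow_nonneg (hp i) _)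

variable [DecidableEq ι]

theorem sum_multinomialWeight (hp1 : ∑ i, p i = 1) (m : ℕ) :
    ∑ y ∈ piAntidiag univ m, multinomialWeight p y = 1 := by
  simpa [hp1, multinomialWeight] using (sum_pow_eq_sum_piAntidiag univ p m).symm

theorem multinomial_add_single_mul (z : ι → ℕ) (i : ι) :
    Nat.multinomial univ (z + Pi.single i 1) * (z i + 1)
      = (∑ j, z j + 1) * Nat.multinomial univ z := by
  have hi : i ∉ univ.erase i := notMem_erase i univ
  have hrest : ∀ j ∈ univ.erase i, (z + Pi.single i 1 : ι → ℕ) j = z j := fun j hj ↦ by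
    simp [(mem_erase.1 hj).1]
  rw [← insert_erase (mem_univ i), Nat.multinomial_insert hi, Nat.multinomial_insert hi,
    sum_insert hi, Nat.multinomial_congr hrest, sum_congr rfl hrest]
  simp only [Pi.add_apply, Pi.single_eq_same]
  rw [show z i + 1 + ∑ j ∈ univ.erase i, z j = z i + ∑ j ∈ univ.erase i, z j + 1 by ring,
    mul_right_comm, ← Nat.add_one_mul_choose_eq, mul_assoc]

theorem multinomialWeight_add_single_mul (p : ι → ℝ) (z : ι → ℕ) (i : ι) :
    multinomialWeight p (z + Pi.single i 1) * (z i + 1)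
      = (∑ j, z j + 1) * p i * multinomialWeight p z := by
  have hprod : ∏ j, p j ^ (z + Pi.single i 1 : ι → ℕ) j = p i * ∏ j, p j ^ z j := by
    simp only [Pi.add_apply, pow_add, prod_mul_distrib]
    simp [Pi.single_apply, pow_ite, mul_comm]
  have hcoef := congrArg (Nat.cast (R := ℝ)) (multinomial_add_single_mul z i)
  push_cast at hcoef
  rw [multinomialWeight, multinomialWeight, hprod]
  push_cast
  linear_combination (p i * ∏ j, p j ^ z j) * hcoef

theorem add_single_mem_piAntidiag_iff {z : ι → ℕ} {i : ι} {m : ℕ} :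
    z + Pi.single i 1 ∈ piAntidiag univ (m + 1) ↔ z ∈ piAntidiag univ m := by
  simp [sum_add_distrib]

theorem sum_multinomialWeight_mul_apply_mul (p : ι → ℝ) (m : ℕ) (i : ι) (f : (ι → ℕ) → ℝ) :
    ∑ y ∈ piAntidiag univ (m + 1), multinomialWeight p y * (y i * f y)
      = (m + 1) * p i * ∑ z ∈ piAntidiag univ m, multinomialWeight p z * f (z + Pi.single i 1) := by
  set e := addRightEmbedding (Pi.single i 1 : ι → ℕ)
  have hsub : (piAntidiag univ m).map e ⊆ piAntidiag univ (m + 1) := fun y hy ↦ by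
    obtain ⟨z, hz, rfl⟩ := mem_map.1 hy
    exact add_single_mem_piAntidiag_iff.2 hz
  have hzero : ∀ y ∈ piAntidiag univ (m + 1), y ∉ (piAntidiag univ m).map e →
      multinomialWeight p y * (y i * f y) = 0 := by
    intro y hy hy'
    suffices y i = 0 by simp [this]
    by_contra hyi
    have hle : Pi.single i 1 ≤ y := fun j ↦ by
      rcases eq_or_ne j i with rfl | hj
      · simpa [Nat.one_le_iff_ne_zero] using hyi
      · simp [hj]
    refine hy' (mem_map.2 ⟨y - Pi.single i 1, ?_, tsub_add_cancel_of_le hle⟩)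
    rwa [← add_single_mem_piAntidiag_iff, tsub_add_cancel_of_le hle]
  rw [← sum_subset hsub hzero, sum_map, mul_sum]
  refine sum_congr rfl fun z hz ↦ ?_
  have hweight := multinomialWeight_add_single_mul p z i
  rw [(mem_piAntidiag.1 hz).1] at hweight
  simp only [e, addRightEmbedding_apply, Pi.add_apply, Pi.single_eq_same]
  push_cast
  linear_combination f (z + Pi.single i 1) * hweight

theorem sum_multinomialWeight_mul_apply (hp1 : ∑ i, p i = 1) (m : ℕ) (i : ι) :
    ∑ y ∈ piAntidiag univ m, multinomialWeight p y * y i = m * p i := by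
  cases m with
  | zero => simp
  | succ m =>
    simpa [sum_multinomialWeight hp1] using sum_multinomialWeight_mul_apply_mul p m i fun _ ↦ 1

theorem sum_multinomialWeight_mul_apply_sq (hp1 : ∑ i, p i = 1) (m : ℕ) (i : ι) :
    ∑ y ∈ piAntidiag univ m, multinomialWeight p y * (y i : ℝ) ^ 2
      = m * p i * ((m - 1) * p i + 1) := by
  cases m with
  | zero => simp
  | succ m =>
    have hshift := sum_multinomialWeight_mul_apply_mul p m i fun y ↦ (y i : ℝ)
    simp only [Pi.add_apply, Pi.single_eq_same, Nat.cast_add, Nat.cast_one, mul_add, mul_one,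
      sum_add_distrib, sum_multinomialWeight_mul_apply hp1, sum_multinomialWeight hp1] at hshift
    simp only [sq, hshift]
    push_cast
    ring

end Multinomial

section AddSmoothing

variable {ι : Type*} [Fintype ι] {p x : ι → ℝ} {n : ℕ} {a : ℝ}

/-- On the counts `X` this is `P̂_B`; on `n • P` it is the mean of `P̂_B`. -/
noncomputable def addSmoothing (n : ℕ) (a : ℝ) (x : ι → ℝ) (i : ι) : ℝ :=
  (x i + a) / (n + Fintype.card ι * a)

theorem addSmoothing_pos [Nonempty ι] (ha : 0 < a) (hx : ∀ i, 0 ≤ x i) (i : ι) :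
    0 < addSmoothing n a x i := by
  have := hx i
  unfold addSmoothing
  positivity

theorem sum_addSmoothing [Nonempty ι] (ha : 0 < a) (hx : ∑ i, x i = n) :
    ∑ i, addSmoothing n a x i = 1 := by
  have hN : (n : ℝ) + Fintype.card ι * a ≠ 0 := by positivity
  simp only [addSmoothing]
  rw [← sum_div, sum_add_distrib, hx, sum_const, card_univ, nsmul_eq_mul,
    div_self hN]

theorem addSmoothing_eq_mix [Nonempty ι] (ha : 0 < a) (i : ι) :
    addSmoothing n a (fun j ↦ n * p j) i
      = (1 - Fintype.card ι * a / (n + Fintype.card ι * a)) * p i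
        + Fintype.card ι * a / (n + Fintype.card ι * a) / Fintype.card ι := by
  have hS : (0 : ℝ) < Fintype.card ι := by exact_mod_cast Fintype.card_pos
  have hN : (0 : ℝ) < n + Fintype.card ι * a := by positivity
  unfold addSmoothing
  field_simp
  ring

variable [DecidableEq ι]

theorem sum_multinomialWeight_mul_addSmoothing (hp1 : ∑ i, p i = 1) (i : ι) :
    ∑ y ∈ piAntidiag univ n, multinomialWeight p y * addSmoothing n a (fun j ↦ y j) i
      = addSmoothing n a (fun j ↦ n * p j) i := by
  have hsplit : ∀ y : ι → ℕ, multinomialWeight p y * addSmoothing n a (fun j ↦ y j) i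
      = (multinomialWeight p y * y i + a * multinomialWeight p y) / (n + Fintype.card ι * a) :=
    fun y ↦ by rw [addSmoothing]; ring
  rw [sum_congr rfl fun y _ ↦ hsplit y, ← sum_div, sum_add_distrib, ← mul_sum,
    sum_multinomialWeight_mul_apply hp1, sum_multinomialWeight hp1, mul_one, addSmoothing]

theorem sum_multinomialWeight_mul_add_sq (hp1 : ∑ i, p i = 1) (i : ι) :
    ∑ y ∈ piAntidiag univ n, multinomialWeight p y * ((y i : ℝ) + a) ^ 2
      = (n * p i + a) ^ 2 + n * p i * (1 - p i) := by
  have hsplit : ∀ y : ι → ℕ, multinomialWeight p y * ((y i : ℝ) + a) ^ 2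
      = multinomialWeight p y * (y i : ℝ) ^ 2 + 2 * a * (multinomialWeight p y * y i)
        + a ^ 2 * multinomialWeight p y := fun y ↦ by ring
  rw [sum_congr rfl fun y _ ↦ hsplit y, sum_add_distrib, sum_add_distrib, ← mul_sum, ← mul_sum,
    sum_multinomialWeight_mul_apply_sq hp1, sum_multinomialWeight_mul_apply hp1,
    sum_multinomialWeight hp1]
  ring

theorem sum_multinomialWeight_mul_chiSq_le [Nonempty ι] (hp : ∀ i, 0 ≤ p i) (hp1 : ∑ i, p i = 1)
    (ha : 0 < a) :
    ∑ y ∈ piAntidiag univ n, multinomialWeight p y *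
        ∑ i, addSmoothing n a (fun j ↦ y j) i ^ 2 / addSmoothing n a (fun j ↦ n * p j) i
      ≤ 1 + (Fintype.card ι - 1) / (n + Fintype.card ι * a) := by
  set N : ℝ := n + Fintype.card ι * a with hNdef
  have hN : 0 < N := by positivity
  have hterm : ∀ i, ∑ y ∈ piAntidiag univ n, multinomialWeight p y *
        (addSmoothing n a (fun j ↦ y j) i ^ 2 / addSmoothing n a (fun j ↦ n * p j) i)
      ≤ addSmoothing n a (fun j ↦ n * p j) i + (1 - p i) / N := by
    intro i
    have hq : 0 < (n : ℝ) * p i + a := by have := hp i; positivity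
    have hp1' : p i ≤ 1 := hp1 ▸ single_le_sum (fun j _ ↦ hp j) (mem_univ i)
    simp only [addSmoothing, div_pow, mul_div_assoc', ← sum_div]
    rw [sum_multinomialWeight_mul_add_sq hp1, ← hNdef]
    have hvar : (n : ℝ) * p i * (1 - p i) / (N * (n * p i + a)) ≤ (1 - p i) / N := by
      rw [div_le_div_iff₀ (by positivity) hN]
      nlinarith [mul_nonneg (mul_nonneg (sub_nonneg.2 hp1') ha.le) hN.le]
    calc ((n * p i + a) ^ 2 + n * p i * (1 - p i)) / N ^ 2 / ((n * p i + a) / N)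
        = (n * p i + a) / N + n * p i * (1 - p i) / (N * (n * p i + a)) := by
          field_simp
      _ ≤ (n * p i + a) / N + (1 - p i) / N := by gcongr
  calc _ = ∑ i, ∑ y ∈ piAntidiag univ n, multinomialWeight p y *
        (addSmoothing n a (fun j ↦ y j) i ^ 2 / addSmoothing n a (fun j ↦ n * p j) i) := by
        simp only [mul_sum]; exact sum_comm
    _ ≤ ∑ i, (addSmoothing n a (fun j ↦ n * p j) i + (1 - p i) / N) := sum_le_sum fun i _ ↦ hterm i
    _ = 1 + (Fintype.card ι - 1) / N := by
        rw [sum_add_distrib, sum_addSmoothing ha (by rw [← mul_sum, hp1, mul_one]), ← sum_div,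
          sum_sub_distrib, hp1, sum_const, card_univ, nsmul_eq_mul, mul_one]

end AddSmoothing

theorem sum_multinomialWeight_mul_entropy_addSmoothing_mem_Icc {ι : Type*} [Fintype ι]
    [DecidableEq ι] [Nonempty ι] {p : ι → ℝ} (hp : ∀ i, 0 ≤ p i) (hp1 : ∑ i, p i = 1) (n : ℕ)
    {a : ℝ} (ha : 0 < a) :
    ∑ y ∈ piAntidiag univ n, multinomialWeight p y * entropy (addSmoothing n a fun j ↦ y j)
      ∈ Set.Icc (entropy (addSmoothing n a fun j ↦ n * p j)
          - log (1 + (Fintype.card ι - 1) / (n + Fintype.card ι * a)))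
        (entropy (addSmoothing n a fun j ↦ n * p j)) := by
  have hw := fun (y : ι → ℕ) (_ : y ∈ piAntidiag univ n) ↦ multinomialWeight_nonneg hp y
  have hr := fun (y : ι → ℕ) (_ : y ∈ piAntidiag univ n) ↦
    addSmoothing_pos (n := n) ha fun j ↦ Nat.cast_nonneg (y j)
  have hr1 : ∀ y ∈ piAntidiag (univ : Finset ι) n, ∑ i, addSmoothing n a (fun j ↦ y j) i = 1 :=
    fun y hy ↦ sum_addSmoothing ha (by exact_mod_cast (mem_piAntidiag.1 hy).1)
  have hq := addSmoothing_pos (n := n) ha fun j ↦ mul_nonneg (Nat.cast_nonneg n) (hp j)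
  have hq1 : ∑ i, addSmoothing n a (fun j ↦ n * p j) i = 1 :=
    sum_addSmoothing ha (by rw [← mul_sum, hp1, mul_one])
  rw [sum_mul_entropy_eq_entropy_sub _ hr hq (sum_multinomialWeight_mul_addSmoothing hp1)]
  constructor
  · linarith [sum_mul_relEntropy_le_log _ hw (sum_multinomialWeight hp1 n) hr hr1 hq
      (sum_multinomialWeight_mul_chiSq_le hp hp1 ha)]
  · linarith [sum_mul_relEntropy_nonneg _ hw hr hr1 hq hq1]

theorem mExp_eq_sum_piAntidiag (n S : ℕ) (p : Fin S → ℝ) (g : (Fin S → ℕ) → ℝ) :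
    mExp n S p g = ∑ y ∈ piAntidiag univ n, multinomialWeight p y * g y := by
  rw [mExp, ← sum_filter]
  refine sum_nbij (fun x i ↦ (x i : ℕ)) (fun x hx ↦ by simpa using hx)
    (fun x _ x' _ h ↦ funext fun i ↦ Fin.ext (congrFun h i)) (fun y hy ↦ ?_) (fun x hx ↦ ?_)
  · have hsum := (mem_piAntidiag.1 hy).1
    refine ⟨fun i ↦ ⟨y i, Nat.lt_succ_of_le (hsum ▸ single_le_sum (by simp) (mem_univ i))⟩,
      by simpa using hsum, rfl⟩
  · have hsum : ∑ i, (x i : ℕ) = n := (mem_filter.1 hx).2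
    have hcoef : (Nat.multinomial univ (fun i ↦ (x i : ℕ)) : ℝ)
        = n.factorial / ∏ i, ((x i : ℕ).factorial : ℝ) := by
      have hspec := Nat.multinomial_spec univ fun i ↦ (x i : ℕ)
      rw [hsum] at hspec
      rw [eq_div_iff (by positivity), mul_comm]
      exact_mod_cast hspec
    rw [multinomialWeight, hcoef]

theorem Hhat_eq_entropy_addSmoothing (n S : ℕ) (a : ℝ) (x : Fin S → ℕ) :
    Hhat n S a x = entropy (addSmoothing n a fun j ↦ x j) := by
  simp [Hhat, entropy_eq_neg_sum, addSmoothing]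

theorem stmt12_general (n S : ℕ) (hS : 2 ≤ S) (a : ℝ) (ha : 0 < a)
    (hna : (S : ℝ) * a ≤ n)
    (p : Fin S → ℝ) (hp : ∀ i, 0 ≤ p i) (hps : ∑ i, p i = 1) :
    |mExp n S p (Hhat n S a) - (-∑ i, p i * Real.log (p i))|
      ≤ Real.log (1 + ((S : ℝ) - 1) / ((n : ℝ) + S * a)) +
        (2 * S * a / ((n : ℝ) + S * a)) * Real.log (((n : ℝ) + S * a) / (2 * a)) := by
  have : Nonempty (Fin S) := ⟨⟨0, by omega⟩⟩
  have hS2 : (2 : ℝ) ≤ S := by exact_mod_cast hS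
  have hN : 0 < (n : ℝ) + S * a := by positivity
  set t : ℝ := S * a / (n + S * a) with ht
  have ht0 : 0 < t := by positivity
  have ht2 : t ≤ 1 / 2 := by rw [div_le_iff₀ hN]; linarith
  have hq : (addSmoothing n a fun j ↦ n * p j) = fun i ↦ (1 - t) * p i + t / S := by
    funext i; simpa using addSmoothing_eq_mix (n := n) (p := p) ha i
  obtain ⟨hlow, hup⟩ := sum_multinomialWeight_mul_entropy_addSmoothing_mem_Icc hp hps n ha
  simp only [hq, Fintype.card_fin] at hlow hup
  have hmix_low := entropy_le_entropy_mix ht0.le (by linarith) hp hps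
  have hmix_up := (entropy_mix_sub_entropy_le ht0.le (by linarith) hp hps).trans
    (sub_one_mul_negMulLog_div_add_le (by simpa using hS2) ht0 ht2)
  simp only [Fintype.card_fin] at hmix_low hmix_up
  rw [mExp_eq_sum_piAntidiag, ← entropy_eq_neg_sum]
  simp only [Hhat_eq_entropy_addSmoothing]
  have h2t : 2 * t = 2 * S * a / (n + S * a) := by ring
  have hSt : S / (2 * t) = (n + S * a) / (2 * a) := by rw [ht]; field_simp
  have hlog1 : 0 ≤ log (1 + ((S : ℝ) - 1) / (n + S * a)) :=
    log_nonneg (by linarith [div_nonneg (by linarith : (0 : ℝ) ≤ S - 1) hN.le])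
  have hlog2 : 0 ≤ 2 * t * log (S / (2 * t)) :=
    mul_nonneg (by positivity) (log_nonneg (by rw [le_div_iff₀ (by positivity)]; linarith))
  rw [← h2t, ← hSt, abs_le]
  constructor <;> linarith

/-- For n ≥ Sa, the bias of H(P̂_B) is uniformly bounded:
|E_P[H(P̂_B)] - H(P)| ≤ ln(1 + (S-1)/(n+Sa)) + (2Sa/(n+Sa))·ln((n+Sa)/(2a))
for every distribution P on S elements. -/
theorem stmt12 (n S : ℕ) (hn : 1 ≤ n) (hS : 2 ≤ S) (a : ℝ) (ha : 0 < a)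
    (hna : (S : ℝ) * a ≤ n)
    (p : Fin S → ℝ) (hp : ∀ i, 0 ≤ p i) (hps : ∑ i, p i = 1) :
    |mExp n S p (Hhat n S a) - (-∑ i, p i * Real.log (p i))|
      ≤ Real.log (1 + ((S : ℝ) - 1) / ((n : ℝ) + S * a)) +
        (2 * S * a / ((n : ℝ) + S * a)) * Real.log (((n : ℝ) + S * a) / (2 * a)) :=
  stmt12_general n S hS a ha hna p hp hps
end

section
/- Let a > 0, S ≥ 2, n ≥ Sa, S ≥ e(2n+1), and let Ĥ^Bayes = ψ(Sa+n+1) - ∑_i ((a+X_i)/(Sa+n))·ψ(a+X_i+1) where (X_1,...,X_S) ∼ Multinomial(n; P). Then sup over distributions P on S elements of E_P[(Ĥ^Bayes - H(P))²] ≥ (ln(S/(e(2n+1))))². -/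
/-!
Log-convexity of `Γ` gives `ψ x ≤ log x` and makes `ψ` increasing on `(0, ∞)`, so `ψ ≥ ψ 1 = -γ`
on `[1, ∞)`. As the weights `(a + X_i)/(Sa + n)` sum to one, `Ĥ^Bayes ≤ log (Sa + n + 1) + γ
≤ 1 + log (2n + 1)` for every sample. At the uniform distribution `H = log S ≥ 1 + log (2n + 1)`,
which bounds the squared error below. The risk is continuous on the compact simplex, so the
supremum (which would be `0` for an unbounded set) is a genuine one.
-/

open Finset

/-- The digamma function ψ(x) = Γ'(x)/Γ(x). -/
noncomputable def digamma (x : ℝ) : ℝ := deriv Real.Gamma x / Real.Gamma x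

/-- The Bayes entropy estimator under the Dir(a,...,a) prior. -/
noncomputable def HBayes (n S : ℕ) (a : ℝ) (x : Fin S → ℕ) : ℝ :=
  digamma ((S : ℝ) * a + n + 1) -
    ∑ i, ((a + x i) / ((S : ℝ) * a + n)) * digamma (a + x i + 1)

open Real

lemma differentiableAt_log_Gamma {x : ℝ} (hx : 0 < x) :
    DifferentiableAt ℝ (log ∘ Gamma) x := by
  have h : ∀ m : ℕ, x ≠ -m := fun m => ((neg_nonpos.mpr m.cast_nonneg).trans_lt hx).ne'
  exact (differentiableAt_Gamma h).log (Gamma_ne_zero h)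

lemma deriv_log_Gamma {x : ℝ} (hx : 0 < x) : deriv (log ∘ Gamma) x = digamma x := by
  have h : ∀ m : ℕ, x ≠ -m := fun m => ((neg_nonpos.mpr m.cast_nonneg).trans_lt hx).ne'
  rw [Function.comp_def, deriv.log (differentiableAt_Gamma h) (Gamma_ne_zero h), digamma]

lemma log_Gamma_add_one {x : ℝ} (hx : 0 < x) :
    log (Gamma (x + 1)) = log (Gamma x) + log x := by
  rw [Gamma_add_one hx.ne', log_mul hx.ne' (Gamma_pos_of_pos hx).ne', add_comm]

lemma digamma_le_log {x : ℝ} (hx : 0 < x) : digamma x ≤ log x := by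
  have h := convexOn_log_Gamma.deriv_le_slope (Set.mem_Ioi.mpr hx)
    (Set.mem_Ioi.mpr (by linarith : 0 < x + 1)) (by linarith) (differentiableAt_log_Gamma hx)
  rwa [deriv_log_Gamma hx, slope_def_field, Function.comp_apply, Function.comp_apply,
    log_Gamma_add_one hx, add_sub_cancel_left, add_sub_cancel_left, div_one] at h

lemma digamma_monotoneOn : MonotoneOn digamma (Set.Ioi 0) := by
  intro x hx y hy hxy
  have h := convexOn_log_Gamma.monotoneOn_deriv (fun z hz => differentiableAt_log_Gamma hz)
    hx hy hxy
  rwa [deriv_log_Gamma hx, deriv_log_Gamma hy] at h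

lemma digamma_one : digamma 1 = -eulerMascheroniConstant := by
  rw [digamma, hasDerivAt_Gamma_one.deriv, Gamma_one, div_one]

lemma neg_eulerMascheroniConstant_le_digamma {y : ℝ} (hy : 1 ≤ y) :
    -eulerMascheroniConstant ≤ digamma y :=
  digamma_one ▸ digamma_monotoneOn (Set.mem_Ioi.mpr one_pos) (Set.mem_Ioi.mpr (by linarith)) hy

lemma continuous_mExp {n S : ℕ} {G : (Fin S → ℝ) → (Fin S → ℕ) → ℝ}
    (hG : ∀ x, Continuous fun p => G p x) : Continuous fun p => mExp n S p (G p) :=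
  continuous_finsetSum _ fun x _ => by split_ifs <;> fun_prop

lemma bddAbove_setOf_mExp {n S : ℕ} {G : (Fin S → ℝ) → (Fin S → ℕ) → ℝ}
    (hG : ∀ x, Continuous fun p => G p x) :
    BddAbove {r : ℝ | ∃ p : Fin S → ℝ, (∀ i, 0 ≤ p i) ∧ (∑ i, p i = 1) ∧
      r = mExp n S p (G p)} := by
  refine ((isCompact_stdSimplex ℝ (Fin S)).image (continuous_mExp (n := n) hG)).bddAbove.mono ?_
  rintro r ⟨p, hp0, hp1, rfl⟩
  exact ⟨p, ⟨hp0, hp1⟩, rfl⟩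

lemma le_of_mem_piAntidiag_univ {S n : ℕ} {k : Fin S → ℕ} (hk : k ∈ piAntidiag univ n)
    (i : Fin S) : k i ≤ n :=
  (mem_piAntidiag.1 hk).1 ▸ single_le_sum (fun _ _ => Nat.zero_le _) (mem_univ i)

-- The multinomial theorem, after reindexing the counts from `Fin (n + 1)` to `ℕ`.
lemma mExp_const {n S : ℕ} (p : Fin S → ℝ) (c : ℝ) :
    mExp n S p (fun _ => c) = c * (∑ i, p i) ^ n := by
  rw [sum_pow_eq_sum_piAntidiag, mul_sum, mExp, ← sum_filter]
  refine sum_nbij' (fun x i => (x i : ℕ)) (fun k i => ⟨min (k i) n, by omega⟩) ?_ ?_ ?_ ?_ ?_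
  · intro x hx
    simpa using (mem_filter.1 hx).2
  · intro k hk
    have hk' := mem_coe.1 hk
    have hle := le_of_mem_piAntidiag_univ hk'
    simpa [hle] using (mem_piAntidiag.1 hk').1
  · intro x _
    funext i
    exact Fin.ext (min_eq_left (Nat.lt_succ_iff.mp (x i).isLt))
  · intro k hk
    funext i
    exact min_eq_left (le_of_mem_piAntidiag_univ hk i)
  · intro x hx
    have hspec := Nat.multinomial_spec univ (fun i => (x i : ℕ))
    rw [(mem_filter.1 hx).2] at hspec
    have hprod : (∏ i, ((x i : ℕ).factorial : ℝ)) ≠ 0 := by positivity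
    rw [← hspec, Nat.cast_mul, Nat.cast_prod, mul_div_cancel_left₀ _ hprod]
    ring

lemma mExp_mono {n S : ℕ} {p : Fin S → ℝ} (hp : ∀ i, 0 ≤ p i) {g h : (Fin S → ℕ) → ℝ}
    (hgh : ∀ x : Fin S → ℕ, ∑ i, x i = n → g x ≤ h x) : mExp n S p g ≤ mExp n S p h := by
  refine sum_le_sum fun x _ => ?_
  split_ifs with hx
  · exact mul_le_mul_of_nonneg_left (hgh _ hx)
      (mul_nonneg (by positivity) (prod_nonneg fun i _ => pow_nonneg (hp i) _))
  · exact le_rfl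

lemma le_mExp {n S : ℕ} {p : Fin S → ℝ} (hp : ∀ i, 0 ≤ p i) (hp1 : ∑ i, p i = 1)
    {c : ℝ} {g : (Fin S → ℕ) → ℝ} (hg : ∀ x : Fin S → ℕ, ∑ i, x i = n → c ≤ g x) :
    c ≤ mExp n S p g := by
  simpa [mExp_const, hp1] using mExp_mono hp hg

lemma entropy_uniform {S : ℕ} (hS : 0 < S) :
    -∑ _i : Fin S, (S : ℝ)⁻¹ * log (S : ℝ)⁻¹ = log S := by
  rw [sum_const, card_univ, Fintype.card_fin, nsmul_eq_mul, log_inv]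
  field_simp

lemma HBayes_le_log_add_eulerMascheroniConstant {n S : ℕ} (hS : 0 < S) {a : ℝ} (ha : 0 < a)
    {x : Fin S → ℕ} (hx : ∑ i, x i = n) :
    HBayes n S a x ≤ log (S * a + n + 1) + eulerMascheroniConstant := by
  have hden : 0 < (S : ℝ) * a + n := by positivity
  have hweights : ∑ i, (a + x i) / ((S : ℝ) * a + n) = 1 := by
    rw [← sum_div, div_eq_one_iff_eq hden.ne', sum_add_distrib, sum_const, card_univ,
      Fintype.card_fin, nsmul_eq_mul, ← Nat.cast_sum, hx]
  have hmean : -eulerMascheroniConstant ≤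
      ∑ i, (a + x i) / ((S : ℝ) * a + n) * digamma (a + x i + 1) :=
    calc -eulerMascheroniConstant
        = ∑ i, (a + x i) / ((S : ℝ) * a + n) * -eulerMascheroniConstant := by
          rw [← sum_mul, hweights, one_mul]
      _ ≤ _ := sum_le_sum fun i _ => mul_le_mul_of_nonneg_left
          (neg_eulerMascheroniConstant_le_digamma (le_add_of_nonneg_left (by positivity)))
          (by positivity)
  have hfirst := digamma_le_log (x := (S : ℝ) * a + n + 1) (by positivity)
  rw [HBayes]
  linarith

theorem stmt17_general (n S : ℕ) (a : ℝ) (ha : 0 < a)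
    (hna : (S : ℝ) * a ≤ n)
    (hSn : Real.exp 1 * (2 * (n : ℝ) + 1) ≤ S) :
    sSup {r : ℝ | ∃ p : Fin S → ℝ, (∀ i, 0 ≤ p i) ∧ (∑ i, p i = 1) ∧
        r = mExp n S p (fun x =>
          (HBayes n S a x - (-∑ i, p i * Real.log (p i))) ^ 2)}
      ≥ (Real.log ((S : ℝ) / (Real.exp 1 * (2 * (n : ℝ) + 1)))) ^ 2 := by
  have he : 0 < exp 1 * (2 * (n : ℝ) + 1) := by positivity
  have hS0 : (0 : ℝ) < S := he.trans_le hSn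
  have hc : 0 ≤ log (S / (exp 1 * (2 * (n : ℝ) + 1))) := log_nonneg ((one_le_div he).2 hSn)
  rw [log_div hS0.ne' he.ne', log_mul (exp_ne_zero 1) (by positivity), log_exp] at hc ⊢
  have huniform : ∑ _i : Fin S, (S : ℝ)⁻¹ = 1 := by
    rw [sum_const, card_univ, Fintype.card_fin, nsmul_eq_mul, mul_inv_cancel₀ hS0.ne']
  refine le_csSup_of_le (bddAbove_setOf_mExp fun x => by fun_prop)
    ⟨fun _ => (S : ℝ)⁻¹, fun _ => by positivity, huniform, rfl⟩ ?_
  rw [entropy_uniform (Nat.cast_pos.1 hS0)]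
  refine le_mExp (fun _ => by positivity) huniform fun x hx => ?_
  have hbayes := HBayes_le_log_add_eulerMascheroniConstant (Nat.cast_pos.1 hS0) ha hx
  have hlog : log ((S : ℝ) * a + n + 1) ≤ log (2 * n + 1) :=
    log_le_log (by positivity) (by linarith)
  have hγ := eulerMascheroniConstant_lt_two_thirds
  exact (pow_le_pow_left₀ hc (by linarith) 2).trans_eq (sub_sq_comm _ _)

/-- If n ≥ Sa and S ≥ e(2n+1), then
sup_P E_P[(Ĥ^Bayes - H(P))²] ≥ (ln(S/(e(2n+1))))². -/
theorem stmt17 (n S : ℕ) (hn : 1 ≤ n) (hS : 2 ≤ S) (a : ℝ) (ha : 0 < a)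
    (hna : (S : ℝ) * a ≤ n)
    (hSn : Real.exp 1 * (2 * (n : ℝ) + 1) ≤ S) :
    sSup {r : ℝ | ∃ p : Fin S → ℝ, (∀ i, 0 ≤ p i) ∧ (∑ i, p i = 1) ∧
        r = mExp n S p (fun x =>
          (HBayes n S a x - (-∑ i, p i * Real.log (p i))) ^ 2)}
      ≥ (Real.log ((S : ℝ) / (Real.exp 1 * (2 * (n : ℝ) + 1)))) ^ 2 :=
  stmt17_general n S a ha hna hSn
end

section
/- Let a > 0, S ≥ 2, n < Sa, and let Ĥ^Bayes = ψ(Sa+n+1) - ∑_i ((a+X_i)/(Sa+n))·ψ(a+X_i+1) where (X_1,...,X_S) ∼ Multinomial(n; P). Then sup over P of E_P[(Ĥ^Bayes - H(P))²] ≥ (max{0, ln((Sa+n)/(e(a+n+1)))})². -/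
/-
Under the point mass P = δ_j the counts are n·e_j and H(P) = 0, so the risk at δ_j is
Ĥ(n·e_j)². The estimator is bounded below by comparing ψ with log: convexity of log Γ and
Γ(x+1) = xΓ(x) give log x ≤ ψ(x+1) and ψ(x) ≤ log x for x > 0, whence ψ(Sa+n+1) ≥ log(Sa+n)
while the weights (a+X_i)/(Sa+n) average ψ(a+X_i+1) ≤ log(a+n+1). The risk is continuous on
the compact simplex, so the supremum is finite and dominates the risk at δ_j.
-/

open Finset

open Real

lemma differentiableAt_Gamma_of_pos {x : ℝ} (hx : 0 < x) : DifferentiableAt ℝ Gamma x :=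
  differentiableAt_Gamma fun m ↦ by linarith [Nat.cast_nonneg (α := ℝ) m]

lemma slope_log_Gamma {x : ℝ} (hx : 0 < x) : slope (log ∘ Gamma) x (x + 1) = log x := by
  rw [slope_def_field]
  simp only [Function.comp_apply, Gamma_add_one hx.ne', log_mul hx.ne' (Gamma_pos_of_pos hx).ne']
  ring

lemma log_le_digamma_add_one {x : ℝ} (hx : 0 < x) : log x ≤ digamma (x + 1) := by
  have hx1 : 0 < x + 1 := by linarith
  have h := convexOn_log_Gamma.slope_le_deriv hx hx1 (lt_add_one x)
    (differentiableAt_log_Gamma hx1)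
  rwa [slope_log_Gamma hx, deriv_log_Gamma hx1] at h

lemma log_div_le_HBayes {n S : ℕ} [NeZero S] {a : ℝ} (ha : 0 < a) {x : Fin S → ℕ}
    (hx : ∑ i, x i = n) :
    log (((S : ℝ) * a + n) / (a + n + 1)) ≤ HBayes n S a x := by
  set T : ℝ := (S : ℝ) * a + n
  have hT : 0 < T := by have : (0 : ℝ) < S := mod_cast NeZero.pos S; positivity
  have hweights : ∑ i, (a + x i) / T = 1 := by
    rw [← sum_div, sum_add_distrib, sum_const, card_univ, Fintype.card_fin, nsmul_eq_mul,
      ← Nat.cast_sum, hx, div_self hT.ne']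
  have hterm : ∀ i, (a + x i) / T * digamma (a + x i + 1) ≤ (a + x i) / T * log (a + n + 1) := by
    intro i
    have hxi : (x i : ℝ) ≤ n := by exact_mod_cast hx ▸ single_le_sum (by simp) (mem_univ i)
    gcongr
    calc digamma (a + x i + 1) ≤ log (a + x i + 1) := digamma_le_log (by positivity)
      _ ≤ log (a + n + 1) := by gcongr
  have hmean : ∑ i, (a + x i) / T * digamma (a + x i + 1) ≤ log (a + n + 1) :=
    calc _ ≤ ∑ i, (a + x i) / T * log (a + n + 1) := sum_le_sum fun i _ ↦ hterm i
      _ = log (a + n + 1) := by rw [← sum_mul, hweights, one_mul]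
  rw [HBayes, log_div hT.ne' (by positivity)]
  linarith [log_le_digamma_add_one hT]

lemma mExp_single {n S : ℕ} (j : Fin S) (g : (Fin S → ℕ) → ℝ) :
    mExp n S (Pi.single j 1) g = g (Pi.single j n) := by
  classical
  set x₀ : Fin S → Fin (n + 1) := Pi.single j (Fin.last n)
  have hx₀ : ∀ i, (x₀ i : ℕ) = (Pi.single j n : Fin S → ℕ) i := by
    intro i; by_cases h : i = j <;> simp [x₀, h]
  rw [mExp, sum_eq_single x₀ _ (by simp), if_pos (by simp [hx₀])]
  · rw [show (fun i ↦ (x₀ i : ℕ)) = Pi.single j n from funext hx₀]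
    simp [hx₀, Pi.single_apply, apply_ite, prod_ite_eq', Nat.factorial_ne_zero]
  intro x _ hne
  split_ifs with hsum
  · obtain ⟨i, hij, hi⟩ : ∃ i ≠ j, (x i : ℕ) ≠ 0 := by
      by_contra! h
      have hxj : (x j : ℕ) = n := by
        rwa [sum_eq_single j (fun k _ hk ↦ h k hk) (by simp)] at hsum
      refine hne (funext fun i ↦ Fin.ext ?_)
      by_cases hij : i = j
      · subst hij; simp [x₀, hxj]
      · simp [x₀, hij, h i hij]
    have : ∏ k, (Pi.single j 1 : Fin S → ℝ) k ^ (x k : ℕ) = 0 :=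
      prod_eq_zero (mem_univ i) (by simp [hij, hi])
    rw [this, mul_zero, zero_mul]
  · rfl

lemma continuous_mExp_s18 {X : Type*} [TopologicalSpace X] {n S : ℕ} {p : X → Fin S → ℝ}
    {g : X → (Fin S → ℕ) → ℝ} (hp : Continuous p) (hg : ∀ x, Continuous fun t ↦ g t x) :
    Continuous fun t ↦ mExp n S (p t) (g t) := by
  refine continuous_finsetSum _ fun x _ ↦ ?_
  split_ifs
  · exact (continuous_const.mul (continuous_finsetProd _ fun i _ ↦
      ((continuous_apply i).comp hp).pow _)).mul (hg _)
  · exact continuous_const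

theorem stmt18_general (n S : ℕ) (hS : 2 ≤ S) (a : ℝ) (ha : 0 < a) :
    sSup {r : ℝ | ∃ p : Fin S → ℝ, (∀ i, 0 ≤ p i) ∧ (∑ i, p i = 1) ∧
        r = mExp n S p (fun x =>
          (HBayes n S a x - (-∑ i, p i * Real.log (p i))) ^ 2)}
      ≥ (max 0 (Real.log (((S : ℝ) * a + n) / (Real.exp 1 * (a + n + 1))))) ^ 2 := by
  have : NeZero S := ⟨by omega⟩
  set risk : (Fin S → ℝ) → ℝ :=
    fun p ↦ mExp n S p fun x ↦ (HBayes n S a x - (-∑ i, p i * log (p i))) ^ 2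
  have hset : {r : ℝ | ∃ p : Fin S → ℝ, (∀ i, 0 ≤ p i) ∧ (∑ i, p i = 1) ∧ r = risk p} =
      risk '' stdSimplex ℝ (Fin S) := by
    ext r; simp [stdSimplex, eq_comm, and_assoc]
  have hbdd : BddAbove (risk '' stdSimplex ℝ (Fin S)) :=
    (isCompact_stdSimplex ℝ (Fin S)).bddAbove_image <| Continuous.continuousOn <|
      continuous_mExp_s18 continuous_id fun x ↦ by fun_prop [continuous_mul_log]
  have hrisk : risk (Pi.single 0 1) = HBayes n S a (Pi.single 0 n) ^ 2 := by
    simp [risk, mExp_single, Pi.single_apply, apply_ite]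
  have hL : log (((S : ℝ) * a + n) / (exp 1 * (a + n + 1))) ≤ HBayes n S a (Pi.single 0 n) := by
    have hbound := log_div_le_HBayes (n := n) ha (x := (Pi.single 0 n : Fin S → ℕ)) (by simp)
    have hT : (0 : ℝ) < S * a + n := by positivity
    rw [log_div hT.ne' (by positivity), log_mul (by positivity) (by positivity), log_exp]
    rw [log_div hT.ne' (by positivity)] at hbound
    linarith
  rw [hset, ge_iff_le]
  calc max 0 (log (((S : ℝ) * a + n) / (exp 1 * (a + n + 1)))) ^ 2
      ≤ |HBayes n S a (Pi.single 0 n)| ^ 2 :=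
        pow_le_pow_left₀ (le_max_left _ _)
          (max_le (abs_nonneg _) (hL.trans (le_abs_self _))) 2
    _ = risk (Pi.single 0 1) := by rw [sq_abs, hrisk]
    _ ≤ sSup (risk '' stdSimplex ℝ (Fin S)) :=
        le_csSup hbdd ⟨_, single_mem_stdSimplex ℝ 0, rfl⟩

/-- If n < Sa, then
sup_P E_P[(Ĥ^Bayes - H(P))²] ≥ (max{0, ln((Sa+n)/(e(a+n+1)))})². -/
theorem stmt18 (n S : ℕ) (hn : 1 ≤ n) (hS : 2 ≤ S) (a : ℝ) (ha : 0 < a)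
    (hna : (n : ℝ) < S * a) :
    sSup {r : ℝ | ∃ p : Fin S → ℝ, (∀ i, 0 ≤ p i) ∧ (∑ i, p i = 1) ∧
        r = mExp n S p (fun x =>
          (HBayes n S a x - (-∑ i, p i * Real.log (p i))) ^ 2)}
      ≥ (max 0 (Real.log (((S : ℝ) * a + n) / (Real.exp 1 * (a + n + 1))))) ^ 2 :=
  stmt18_general n S hS a ha
end
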